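/- Let G be a finite connected simple graph of order n ≥ 2. Then γ(M(G ∘ K₁)) = n, where G ∘ K₁ denotes the corona of G and γ denotes the domination number. -/

import Mathlib

/-- `S` is a dominating set of the graph `H`. -/
def IsDomSet {V : Type*} (H : SimpleGraph V) (S : Set V) : Prop :=
  ∀ v : V, v ∈ S ∨ ∃ s ∈ S, H.Adj v s

/-- The domination number of a graph `H`. -/
noncomputable def domNum {V : Type*} (H : SimpleGraph V) : ℕ :=
  sInf {k : ℕ | ∃ S : Set V, IsDomSet H S ∧ S.ncard = k}

/-- The middle graph `M(G)` of a graph `G`: its vertices are the vertices and edges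
of `G`; a vertex is adjacent to the edges incident to it, and two edges are adjacent
iff they are distinct and share an endpoint. -/
def middleGraph {V : Type*} (G : SimpleGraph V) : SimpleGraph (V ⊕ G.edgeSet) where
  Adj x y :=
    match x, y with
    | Sum.inl _, Sum.inl _ => False
    | Sum.inl v, Sum.inr e => v ∈ (e : Sym2 V)
    | Sum.inr e, Sum.inl v => v ∈ (e : Sym2 V)
    | Sum.inr e, Sum.inr f => e ≠ f ∧ ∃ v, v ∈ (e : Sym2 V) ∧ v ∈ (f : Sym2 V)
  symm := by
    refine ⟨?_⟩
    rintro (v | e) (w | f) h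
    · exact h.elim
    · exact h
    · exact h
    · exact ⟨Ne.symm h.1, h.2.imp fun v hv => ⟨hv.2, hv.1⟩⟩
  loopless := by
    refine ⟨?_⟩
    rintro (v | e) h
    · exact h.elim
    · exact h.1 rfl

/-- The corona `G ∘ K₁`: add to each vertex of `G` a pendant vertex. -/
def corona {V : Type*} (G : SimpleGraph V) : SimpleGraph (V ⊕ V) where
  Adj x y :=
    match x, y with
    | Sum.inl a, Sum.inl b => G.Adj a b
    | Sum.inl a, Sum.inr b => a = b
    | Sum.inr a, Sum.inl b => b = a
    | Sum.inr _, Sum.inr _ => False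
  symm := by
    refine ⟨?_⟩
    rintro (a | a) (b | b) h
    · exact G.adj_symm h
    · exact h
    · exact h
    · exact h.elim
  loopless := by
    refine ⟨?_⟩
    rintro (a | a) h
    · exact G.ne_of_adj h rfl
    · exact h.elim

/-! In `M(H)` the closed neighbourhood of a vertex `v` of `H` is `v` together with the edges at
`v`, so the closed neighbourhoods of an independent set of `H` are pairwise disjoint and
`γ(M(H)) ≥ α(H)`; conversely the edges of an edge cover of `H` dominate `M(H)`. In `G ∘ K₁` the
`n` pendant vertices are independent and the `n` pendant edges cover all vertices. -/

section Domination

variable {V : Type*} {H : SimpleGraph V}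

lemma domNum_le_ncard {S : Set V} (hS : IsDomSet H S) : domNum H ≤ S.ncard :=
  Nat.sInf_le ⟨S, hS, rfl⟩

lemma le_domNum {k : ℕ} (h : ∀ S, IsDomSet H S → k ≤ S.ncard) : k ≤ domNum H :=
  le_csInf ⟨_, Set.univ, fun _ => .inl trivial, rfl⟩ fun _ ⟨S, hS, hk⟩ => hk ▸ h S hS

end Domination

namespace SimpleGraph

variable {V : Type*} {H : SimpleGraph V}

lemma isDomSet_middleGraph_of_forall_exists_mem {F : Set H.edgeSet}
    (hF : ∀ v, ∃ e ∈ F, v ∈ (e : Sym2 V)) : IsDomSet (middleGraph H) (Sum.inr '' F) := by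
  rintro (v | e)
  · obtain ⟨e, he, hv⟩ := hF v
    exact .inr ⟨.inr e, Set.mem_image_of_mem _ he, hv⟩
  · by_cases he : e ∈ F
    · exact .inl (Set.mem_image_of_mem _ he)
    · obtain ⟨f, hf, hv⟩ := hF (e : Sym2 V).out.1
      refine .inr ⟨.inr f, Set.mem_image_of_mem _ hf, fun hef => he (hef ▸ hf), _, ?_, hv⟩
      exact Sym2.out_fst_mem _

lemma ncard_le_ncard_of_isIndepSet_of_isDomSet_middleGraph [Finite V] {I : Set V}
    (hI : H.IsIndepSet I) {S : Set (V ⊕ H.edgeSet)} (hS : IsDomSet (middleGraph H) S) :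
    I.ncard ≤ S.ncard := by
  have hcover : ∀ v, ∃ x ∈ S, x = .inl v ∨ ∃ e : H.edgeSet, x = .inr e ∧ v ∈ (e : Sym2 V) := by
    intro v
    rcases hS (.inl v) with hv | ⟨w | e, hx, hadj⟩
    · exact ⟨_, hv, .inl rfl⟩
    · exact hadj.elim
    · exact ⟨_, hx, .inr ⟨e, rfl, hadj⟩⟩
  choose g hgS hg using hcover
  refine Set.ncard_le_ncard_of_injOn g (fun v _ => hgS v) ?_
  intro v hv w hw hvw
  by_contra hne
  rcases hg v with hv' | ⟨e, he, hve⟩ <;> rcases hg w with hw' | ⟨f, hf, hwf⟩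
  · exact hne (Sum.inl_injective (hv'.symm.trans (hvw.trans hw')))
  · exact Sum.inl_ne_inr (hv'.symm.trans (hvw.trans hf))
  · exact Sum.inr_ne_inl (he.symm.trans (hvw.trans hw'))
  · obtain rfl : e = f := Sum.inr_injective (he.symm.trans (hvw.trans hf))
    exact hI hv hw hne (H.adj_of_mem_incidenceSet hne ⟨e.2, hve⟩ ⟨e.2, hwf⟩)

lemma le_domNum_middleGraph_of_isIndepSet [Finite V] {I : Set V} (hI : H.IsIndepSet I) :
    I.ncard ≤ domNum (middleGraph H) :=
  le_domNum fun _ hS => ncard_le_ncard_of_isIndepSet_of_isDomSet_middleGraph hI hS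

end SimpleGraph

namespace corona

variable {V : Type*} (G : SimpleGraph V)

lemma isIndepSet_range_inr : (corona G).IsIndepSet (Set.range Sum.inr) := by
  rintro _ ⟨a, rfl⟩ _ ⟨b, rfl⟩ _ h
  exact h

def pendantEdge (v : V) : (corona G).edgeSet :=
  ⟨s(.inl v, .inr v), rfl⟩

lemma pendantEdge_injective : Function.Injective (pendantEdge G) := by
  intro v w h
  simpa [pendantEdge] using congrArg Subtype.val h

lemma exists_pendantEdge_mem (x : V ⊕ V) :
    ∃ e ∈ Set.range (pendantEdge G), x ∈ (e : Sym2 (V ⊕ V)) := by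
  rcases x with v | v <;> exact ⟨pendantEdge G v, Set.mem_range_self v, by simp [pendantEdge]⟩

end corona

theorem domNum_middle_corona_general {V : Type*} [Fintype V] (G : SimpleGraph V) (n : ℕ)
    (hord : Fintype.card V = n) :
    domNum (middleGraph (corona G)) = n := by
  have hn : Nat.card V = n := Nat.card_eq_fintype_card.trans hord
  apply le_antisymm
  · calc domNum (middleGraph (corona G))
        ≤ (Sum.inr '' Set.range (corona.pendantEdge G)).ncard :=
          domNum_le_ncard (SimpleGraph.isDomSet_middleGraph_of_forall_exists_mem
            (corona.exists_pendantEdge_mem G))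
      _ = n := by
          rw [Set.ncard_image_of_injective _ Sum.inr_injective,
            Set.ncard_range_of_injective (corona.pendantEdge_injective G), hn]
  · calc n = (Set.range (Sum.inr : V → V ⊕ V)).ncard := by
          rw [Set.ncard_range_of_injective Sum.inr_injective, hn]
      _ ≤ domNum (middleGraph (corona G)) :=
          SimpleGraph.le_domNum_middleGraph_of_isIndepSet (corona.isIndepSet_range_inr G)

/-- For a connected graph `G` of order `n ≥ 2`, `γ(M(G ∘ K₁)) = n`. -/
theorem domNum_middle_corona {V : Type*} [Fintype V] (G : SimpleGraph V) (n : ℕ)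
    (hord : Fintype.card V = n) (hn : 2 ≤ n) (hconn : G.Connected) :
    domNum (middleGraph (corona G)) = n :=
  domNum_middle_corona_general G n hord
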